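/- Every tabletop rearrangement instance admits a plan with exactly |{i : sᵢ ≠ gᵢ}| + ν(D) pick-and-place actions in which the set of positions used that are not among {s₁, …, sₙ, g₁, …, gₙ} has cardinality at most the maximum of ν(D[C]) over all strongly connected components C of the dependency digraph D, where ν denotes minimum feedback vertex set cardinality. -/

import Mathlib

open Metric in
/-- A configuration of `n` unit-disc objects in the plane (modeled by `ℂ`) is feasible
if the closed unit discs centered at the object positions are pairwise disjoint. -/
def FeasibleConfig {n : ℕ} (c : Fin n → ℂ) : Prop :=
  ∀ i j : Fin n, i ≠ j → Disjoint (closedBall (c i) 1) (closedBall (c j) 1)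

/-- A pick-and-place action changes the position of exactly one object. -/
def PickPlace {n : ℕ} (c c' : Fin n → ℂ) : Prop :=
  ∃ i : Fin n, c' i ≠ c i ∧ ∀ j : Fin n, j ≠ i → c' j = c j

/-- `plan`, the list of configurations resulting from the successive pick-and-place
actions, is a plan transforming the start configuration `s` into the goal
configuration `g`: each action changes the position of exactly one object, each
resulting configuration is feasible, and the final configuration is the goal.  The
number of actions of the plan is `plan.length`. -/
def IsPlan {n : ℕ} (s g : Fin n → ℂ) (plan : List (Fin n → ℂ)) : Prop :=
  List.Chain PickPlace s plan ∧ (∀ c ∈ plan, FeasibleConfig c) ∧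
    (s :: plan).getLast (by simp) = g

open Metric in
/-- The dependency digraph of the instance: an arc from `i` to `j` (for `i ≠ j`) exactly
when the closed unit disc centered at `g i` intersects the closed unit disc centered at
`s j`. -/
def DepArc {n : ℕ} (s g : Fin n → ℂ) (i j : Fin n) : Prop :=
  i ≠ j ∧ (Metric.closedBall (g i) 1 ∩ Metric.closedBall (s j) 1).Nonempty

/-- `S` is a feedback vertex set of the digraph with arc relation `A`: the subdigraph
induced on the complement of `S` contains no directed cycle (no nontrivial closed
directed walk). -/
def IsFVS {V : Type*} (A : V → V → Prop) (S : Set V) : Prop :=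
  ∀ x : V, ¬ Relation.TransGen (fun u v => A u v ∧ u ∉ S ∧ v ∉ S) x x

/-- `ν(D)`: the minimum cardinality of a feedback vertex set of the digraph with vertex
type `V` and arc relation `A`. -/
noncomputable def nuFVS {V : Type*} (A : V → V → Prop) : ℕ :=
  sInf {k | ∃ S : Set V, IsFVS A S ∧ S.ncard = k}

/-- The setoid of mutual reachability by directed paths; its classes are the strongly
connected components of the digraph. -/
def sccSetoid {V : Type*} (A : V → V → Prop) : Setoid V where
  r u v := Relation.ReflTransGen A u v ∧ Relation.ReflTransGen A v u
  iseqv :=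
    ⟨fun _ => ⟨.refl, .refl⟩, fun h => ⟨h.2, h.1⟩,
      fun h1 h2 => ⟨h1.1.trans h2.1, h2.2.trans h1.2⟩⟩

/-!
An object with `sᵢ = gᵢ` has no out-arcs, so a minimum feedback vertex set `S` of `D`
contains only objects that have to move. The objects are rearranged one strongly connected
component at a time, always taking a component `C` that depends on no other unfinished
component; then objects already at their goals never block objects still at their starts.
Inside `C`, the objects of `S ∩ C` are parked in buffers far from all discs, the other
objects of `C`, which induce an acyclic digraph, go to their goals in topological order, and
finally the parked objects go to their goals. Every object with `sᵢ ≠ gᵢ` moves once and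
every object of `S` once more, and since cycles stay inside components, `|S ∩ C| ≤ ν(D[C])`
by the minimality of `S`, so the buffers, reused from one component to the next, suffice.
-/

theorem Finset.exists_injOn_lt_card {α : Type*} (W : Finset α) :
    ∃ f : α → ℕ, Set.InjOn f W ∧ ∀ i ∈ W, f i < W.card := by
  classical
  refine ⟨fun i => if h : i ∈ W then W.equivFin ⟨i, h⟩ else 0, fun i hi j hj hij => ?_,
    fun i hi => by simp [hi]⟩
  rw [Finset.mem_coe] at hi hj
  simpa [hi, hj, Fin.val_inj] using hij

theorem Finset.card_filter_eq_add_card_filter_sdiff {α : Type*} [DecidableEq α]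
    {C T : Finset α} (h : C ⊆ T) (p : α → Prop) [DecidablePred p] :
    (T.filter p).card = (C.filter p).card + ((T \ C).filter p).card := by
  rw [← Finset.card_union_of_disjoint (Finset.disjoint_filter_filter Finset.disjoint_sdiff),
    ← Finset.filter_union, Finset.union_sdiff_of_subset h]

open Relation

section Digraph

variable {V : Type*} {A : V → V → Prop}

theorem nuFVS_le_ncard {S : Set V} (hS : IsFVS A S) : nuFVS A ≤ S.ncard :=
  Nat.sInf_le ⟨S, hS, rfl⟩

theorem exists_isFVS_ncard_eq_nuFVS [Finite V] (A : V → V → Prop) :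
    ∃ S : Set V, IsFVS A S ∧ S.ncard = nuFVS A := by
  refine Nat.sInf_mem (s := {k | ∃ S : Set V, IsFVS A S ∧ S.ncard = k})
    ⟨_, Set.univ, fun x hx => ?_, rfl⟩
  obtain ⟨_, ⟨-, hx, -⟩, -⟩ := TransGen.head'_iff.1 hx
  exact hx (Set.mem_univ x)

/-- A vertex without out-arcs lies on no cycle. -/
theorem IsFVS.diff_singleton {S : Set V} (hS : IsFVS A S) {x : V} (hx : ∀ y, ¬A x y) :
    IsFVS A (S \ {x}) := by
  have avoid : ∀ u v, A u v → v ≠ x → u ∉ S \ {x} → v ∉ S \ {x} → u ∉ S ∧ v ∉ S :=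
    fun u v huv hv hu hv' => ⟨fun h => hu ⟨h, fun e => hx v (e ▸ huv)⟩, fun h => hv' ⟨h, hv⟩⟩
  have lift : ∀ a b, TransGen (fun u v => A u v ∧ u ∉ S \ {x} ∧ v ∉ S \ {x}) a b → b ≠ x →
      TransGen (fun u v => A u v ∧ u ∉ S ∧ v ∉ S) a b := by
    intro a b hab
    induction hab with
    | single h => exact fun hb => .single ⟨h.1, avoid _ _ h.1 hb h.2.1 h.2.2⟩
    | tail _ h ih =>
      exact fun hb => (ih fun e => hx _ (e ▸ h.1)).tail ⟨h.1, avoid _ _ h.1 hb h.2.1 h.2.2⟩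
  intro y hy
  obtain ⟨z, hyz, -⟩ := TransGen.head'_iff.1 hy
  exact hS y (lift y y hy fun e => hx z (e ▸ hyz.1))

theorem IsFVS.exists_arc_of_ncard_eq [Finite V] {S : Set V} (hS : IsFVS A S)
    (hmin : S.ncard = nuFVS A) {x : V} (hx : x ∈ S) : ∃ y, A x y := by
  by_contra! h
  have := nuFVS_le_ncard (hS.diff_singleton h)
  have := Set.ncard_sdiff_singleton_lt_of_mem hx (Set.toFinite S)
  omega

/-- Outside a feedback vertex set the digraph is acyclic. -/
theorem IsFVS.exists_forall_not_arc [Finite V] {S : Set V} (hS : IsFVS A S) {U : Set V}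
    (hU : U.Nonempty) (hUS : Disjoint U S) : ∃ x ∈ U, ∀ y ∈ U, ¬A x y := by
  let r : V → V → Prop := fun a b => TransGen (fun u v => A u v ∧ u ∉ S ∧ v ∉ S) b a
  have : IsTrans V r := ⟨fun _ _ _ hab hbc => hbc.trans hab⟩
  have : Std.Irrefl r := ⟨hS⟩
  obtain ⟨x, hxU, hmin⟩ := (Finite.wellFounded_of_trans_of_irrefl r).has_min U hU
  exact ⟨x, hxU, fun y hyU hxy =>
    hmin y hyU (.single ⟨hxy, Set.disjoint_left.1 hUS hxU, Set.disjoint_left.1 hUS hyU⟩)⟩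

theorem exists_sink_scc [Finite V] (A : V → V → Prop) {T : Set V} (hT : T.Nonempty) :
    ∃ m ∈ T, ∀ v ∈ T, ReflTransGen A m v → ReflTransGen A v m := by
  let r : V → V → Prop := fun a b => ReflTransGen A b a ∧ ¬ReflTransGen A a b
  have : IsTrans V r := ⟨fun _ _ _ ⟨hba, hab⟩ ⟨hcb, hbc⟩ =>
    ⟨hcb.trans hba, fun hac => hab (hac.trans hcb)⟩⟩
  have : Std.Irrefl r := ⟨fun _ h => h.2 h.1⟩
  obtain ⟨m, hmT, hmin⟩ := (Finite.wellFounded_of_trans_of_irrefl r).has_min T hT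
  exact ⟨m, hmT, fun v hvT hmv => by_contra fun hvm => hmin v hvT ⟨hmv, hvm⟩⟩

theorem mem_of_reflTransGen {T : Set V} (hT : ∀ u v, A u v → v ∈ T → u ∈ T) {x y : V}
    (hxy : ReflTransGen A x y) (hy : y ∈ T) : x ∈ T := by
  induction hxy using ReflTransGen.head_induction_on with
  | refl => exact hy
  | head hxz _ ih => exact hT _ _ hxz ih

theorem Relation.TransGen.scc {R : V → V → Prop} (hRA : ∀ u v, R u v → A u v) {x y : V}
    (hxy : TransGen R x y) (hyx : ReflTransGen A y x) :
    TransGen (fun u v => R u v ∧ Quotient.mk (sccSetoid A) u = Quotient.mk _ x ∧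
      Quotient.mk (sccSetoid A) v = Quotient.mk _ x) x y := by
  induction hxy with
  | single h =>
    exact .single ⟨h, rfl, Quotient.sound ⟨hyx, .single (hRA _ _ h)⟩⟩
  | @tail b c hxb hbc ih =>
    have hbx : ReflTransGen A b x := (ReflTransGen.single (hRA _ _ hbc)).trans hyx
    have hxb' : ReflTransGen A x b := (TransGen.mono hRA _ _ hxb).to_reflTransGen
    exact (ih hbx).tail ⟨hbc, Quotient.sound ⟨hbx, hxb'⟩,
      Quotient.sound ⟨hyx, hxb'.tail (hRA _ _ hbc)⟩⟩

theorem Relation.TransGen.subtype {p : V → Prop} {r : V → V → Prop} {x y : V}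
    (h : TransGen (fun u v => r u v ∧ p u ∧ p v) x y) (hx : p x) (hy : p y) :
    TransGen (fun u v : Subtype p => r u v) ⟨x, hx⟩ ⟨y, hy⟩ := by
  induction h with
  | single h => exact .single h.1
  | tail _ h ih => exact (ih h.2.1).tail h.1

/-- Cycles stay inside strongly connected components, so trading `S ∩ C` for a feedback
vertex set of `D[C]` leaves a feedback vertex set of `D`. -/
theorem ncard_inter_le_nuFVS_scc [Finite V] {S : Set V} (hS : IsFVS A S)
    (hmin : S.ncard = nuFVS A) (c : Quotient (sccSetoid A)) :
    (S ∩ {x | Quotient.mk _ x = c}).ncard ≤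
      nuFVS (fun u v : {x // Quotient.mk (sccSetoid A) x = c} => A u.1 v.1) := by
  obtain ⟨F, hF, hFcard⟩ := exists_isFVS_ncard_eq_nuFVS
    (fun u v : {x // Quotient.mk (sccSetoid A) x = c} => A u.1 v.1)
  have hS' : IsFVS A ((S \ {x | Quotient.mk _ x = c}) ∪ Subtype.val '' F) := by
    intro x hx
    have hcyc := TransGen.scc (fun _ _ h => h.1) hx
      (TransGen.mono (fun _ _ h => h.1) _ _ hx).to_reflTransGen
    by_cases hxc : Quotient.mk (sccSetoid A) x = c
    · subst hxc
      refine hF ⟨x, rfl⟩ (TransGen.mono ?_ _ _ (TransGen.subtype hcyc rfl rfl))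
      rintro u v ⟨huv, hu, hv⟩
      exact ⟨huv, fun h => hu (Or.inr ⟨u, h, rfl⟩), fun h => hv (Or.inr ⟨v, h, rfl⟩)⟩
    · refine hS x (TransGen.mono ?_ _ _ hcyc)
      rintro u v ⟨⟨huv, hu, hv⟩, hux, hvx⟩
      exact ⟨huv, fun h => hu (Or.inl ⟨h, hux.trans_ne hxc⟩),
        fun h => hv (Or.inl ⟨h, hvx.trans_ne hxc⟩)⟩
  have hsplit :=
    Set.ncard_inter_add_ncard_sdiff_eq_ncard S {x | Quotient.mk (sccSetoid A) x = c}
  have hunion := Set.ncard_union_le (S \ {x | Quotient.mk (sccSetoid A) x = c})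
    (Subtype.val '' F)
  have himage := Set.ncard_image_of_injective F Subtype.val_injective
  have := nuFVS_le_ncard hS'
  omega

theorem ncard_inter_le_iSup_nuFVS_scc [Finite V] {S : Set V} (hS : IsFVS A S)
    (hmin : S.ncard = nuFVS A) (c : Quotient (sccSetoid A)) :
    (S ∩ {x | Quotient.mk _ x = c}).ncard ≤ ⨆ d : Quotient (sccSetoid A),
      nuFVS (fun u v : {x // Quotient.mk (sccSetoid A) x = d} => A u.1 v.1) :=
  (ncard_inter_le_nuFVS_scc hS hmin c).trans <| le_ciSup (f := fun d : Quotient (sccSetoid A) =>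
    nuFVS (fun u v : {x // Quotient.mk (sccSetoid A) x = d} => A u.1 v.1))
    (Set.finite_range _).bddAbove c

end Digraph

theorem DepArc.start_ne_goal {n : ℕ} {s g : Fin n → ℂ} (hs : FeasibleConfig s) {i j : Fin n}
    (h : DepArc s g i j) : s i ≠ g i := by
  intro he
  obtain ⟨hij, x, hxi, hxj⟩ := h
  exact Set.disjoint_left.1 (hs i j hij) (he ▸ hxi) hxj

namespace Rearrangement

section Plans

variable {n : ℕ}

theorem isPlan_nil_iff {a c : Fin n → ℂ} : IsPlan a c [] ↔ a = c := by
  change List.IsChain PickPlace [a] ∧ _ ∧ _ ↔ _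
  simp

theorem isPlan_cons_iff {a c d : Fin n → ℂ} {t : List (Fin n → ℂ)} :
    IsPlan a c (d :: t) ↔ PickPlace a d ∧ FeasibleConfig d ∧ IsPlan d c t := by
  change List.IsChain PickPlace (a :: d :: t) ∧ _ ∧ _ ↔
    _ ∧ _ ∧ List.IsChain PickPlace (d :: t) ∧ _ ∧ _
  simp only [List.isChain_cons_cons, List.forall_mem_cons, List.getLast_cons_cons]
  tauto

def HasPlan (P : Set ℂ) (a c : Fin n → ℂ) (k : ℕ) : Prop :=
  ∃ plan : List (Fin n → ℂ), IsPlan a c plan ∧ plan.length = k ∧ ∀ d ∈ plan, ∀ i, d i ∈ P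

variable {P : Set ℂ} {a b c : Fin n → ℂ} {k l : ℕ}

theorem HasPlan.refl (P : Set ℂ) (a : Fin n → ℂ) : HasPlan P a a 0 :=
  ⟨[], isPlan_nil_iff.2 rfl, rfl, by simp⟩

theorem HasPlan.cons (hab : PickPlace a b) (hb : FeasibleConfig b) (hbP : ∀ i, b i ∈ P)
    (hbc : HasPlan P b c k) : HasPlan P a c (k + 1) := by
  obtain ⟨plan, hplan, rfl, hP⟩ := hbc
  exact ⟨b :: plan, isPlan_cons_iff.2 ⟨hab, hb, hplan⟩, rfl, by simpa [hbP] using hP⟩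

theorem HasPlan.trans (hab : HasPlan P a b k) (hbc : HasPlan P b c l) :
    HasPlan P a c (k + l) := by
  obtain ⟨plan, hplan, rfl, hP⟩ := hab
  induction plan generalizing a with
  | nil => simpa [isPlan_nil_iff.1 hplan] using hbc
  | cons d t ih =>
    obtain ⟨had, hd, hdb⟩ := isPlan_cons_iff.1 hplan
    simpa only [List.length_cons, Nat.add_right_comm] using
      (ih hdb fun e he => hP e (List.mem_cons_of_mem d he)).cons had hd (hP d (by simp))

theorem pickPlace_update {i : Fin n} {x : ℂ} (hx : x ≠ a i) :
    PickPlace a (Function.update a i x) :=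
  ⟨i, by simpa using hx, fun j hj => Function.update_of_ne hj x a⟩

end Plans

open Metric

inductive Loc
  | start
  | goal
  | buffer (k : ℕ)

variable {n : ℕ} (s g : Fin n → ℂ) (buf : ℕ → ℂ)

def Loc.point (i : Fin n) : Loc → ℂ
  | .start => s i
  | .goal => g i
  | .buffer k => buf k

def config (σ : Fin n → Loc) : Fin n → ℂ := fun i => (σ i).point s g buf i

structure IsBufferFamily : Prop where
  far_start : ∀ k i, 2 < dist (buf k) (s i)
  far_goal : ∀ k i, 2 < dist (buf k) (g i)
  far_buffer : Pairwise fun k l => 2 < dist (buf k) (buf l)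

def points (K : ℕ) : Set ℂ := Set.range s ∪ Set.range g ∪ buf '' Set.Iio K

structure Admissible (K : ℕ) (σ : Fin n → Loc) : Prop where
  not_depArc : ∀ i j, σ i = .goal → σ j = .start → ¬DepArc s g i j
  buffer_inj : ∀ i j k, σ i = .buffer k → σ j = .buffer k → i = j
  buffer_lt : ∀ i k, σ i = .buffer k → k < K

/-- Buffer slots `3` apart on the positive real axis, beyond all start and goal discs. -/
theorem exists_isBufferFamily : ∃ buf : ℕ → ℂ, IsBufferFamily s g buf := by
  set R := ∑ i, (‖s i‖ + ‖g i‖)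
  have hR : ∀ i, ‖s i‖ + ‖g i‖ ≤ R := fun i =>
    Finset.single_le_sum (f := fun j => ‖s j‖ + ‖g j‖) (fun j _ => by positivity)
      (Finset.mem_univ i)
  have far : ∀ (k : ℕ) (z : ℂ), ‖z‖ ≤ R → 2 < dist ((R + 3 + 3 * k : ℝ) : ℂ) z := by
    intro k z hz
    have := norm_sub_norm_le ((R + 3 + 3 * k : ℝ) : ℂ) z
    rw [Complex.norm_real, Real.norm_of_nonneg (by positivity)] at this
    rw [dist_eq_norm]
    linarith [(Nat.cast_nonneg k : (0 : ℝ) ≤ k)]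
  refine ⟨fun k => ((R + 3 + 3 * k : ℝ) : ℂ),
    fun k i => far k _ (by linarith [hR i, norm_nonneg (g i)]),
    fun k i => far k _ (by linarith [hR i, norm_nonneg (s i)]), fun k l hkl => ?_⟩
  have hkl' : (1 : ℝ) ≤ |(k : ℝ) - l| := by
    exact_mod_cast Int.one_le_abs (sub_ne_zero.2 (Int.natCast_inj.not.2 hkl))
  change 2 < dist ((R + 3 + 3 * k : ℝ) : ℂ) ((R + 3 + 3 * l : ℝ) : ℂ)
  rw [Complex.isometry_ofReal.dist_eq, Real.dist_eq,
    show R + 3 + 3 * (k : ℝ) - (R + 3 + 3 * l) = 3 * (k - l) by ring, abs_mul]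
  norm_num
  linarith

variable {s g buf}

theorem ne_of_two_lt_dist {x y : ℂ} (h : 2 < dist x y) : x ≠ y := by
  rintro rfl
  simp at h
  linarith

theorem disjoint_of_two_lt_dist {x y : ℂ} (h : 2 < dist x y) :
    Disjoint (closedBall x 1) (closedBall y 1) :=
  closedBall_disjoint_closedBall (by linarith)

theorem Admissible.feasibleConfig {K : ℕ} {σ : Fin n → Loc} (hs : FeasibleConfig s)
    (hg : FeasibleConfig g) (hbuf : IsBufferFamily s g buf) (hσ : Admissible s g K σ) :
    FeasibleConfig (config s g buf σ) := by
  have arc : ∀ i j, i ≠ j → σ i = .goal → σ j = .start →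
      Disjoint (closedBall (g i) 1) (closedBall (s j) 1) := fun i j hij hi hj =>
    Set.disjoint_iff_inter_eq_empty.2 <| Set.not_nonempty_iff_eq_empty.1
      fun h => hσ.not_depArc i j hi hj ⟨hij, h⟩
  have far : ∀ i j k, σ i = .buffer k → i ≠ j →
      Disjoint (closedBall (config s g buf σ i) 1) (closedBall (config s g buf σ j) 1) := by
    intro i j k hi hij
    apply disjoint_of_two_lt_dist
    simp only [config, hi, Loc.point]
    cases hj : σ j with
    | start => exact hbuf.far_start k j
    | goal => exact hbuf.far_goal k j
    | buffer l => exact hbuf.far_buffer fun hkl => hij (hσ.buffer_inj i j k hi (hkl ▸ hj))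
  intro i j hij
  cases hi : σ i with
  | buffer k => exact far i j k hi hij
  | start =>
    cases hj : σ j with
    | buffer l => exact (far j i l hj hij.symm).symm
    | start => simpa [config, Loc.point, hi, hj] using hs i j hij
    | goal => simpa [config, Loc.point, hi, hj] using (arc j i hij.symm hj hi).symm
  | goal =>
    cases hj : σ j with
    | buffer l => exact (far j i l hj hij.symm).symm
    | start => simpa [config, Loc.point, hi, hj] using arc i j hij hi hj
    | goal => simpa [config, Loc.point, hi, hj] using hg i j hij

theorem Admissible.config_mem {K : ℕ} {σ : Fin n → Loc} (hσ : Admissible s g K σ)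
    (i : Fin n) : config s g buf σ i ∈ points s g buf K := by
  simp only [config, points]
  cases hi : σ i with
  | start => exact .inl (.inl ⟨i, rfl⟩)
  | goal => exact .inl (.inr ⟨i, rfl⟩)
  | buffer k => exact .inr ⟨k, hσ.buffer_lt i k hi, rfl⟩

theorem config_update (σ : Fin n → Loc) (i : Fin n) (l : Loc) :
    config s g buf (Function.update σ i l) =
      Function.update (config s g buf σ) i (l.point s g buf i) := by
  ext j
  rcases eq_or_ne j i with rfl | hj <;> simp [config, *]

theorem IsBufferFamily.buffer_ne (hbuf : IsBufferFamily s g buf) (k : ℕ) (i : Fin n) :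
    buf k ≠ s i ∧ buf k ≠ g i :=
  ⟨ne_of_two_lt_dist (hbuf.far_start k i), ne_of_two_lt_dist (hbuf.far_goal k i)⟩

variable (s g) in
noncomputable def pending (T : Finset (Fin n)) : Fin n → Loc :=
  fun i => if i ∈ T ∧ s i ≠ g i then .start else .goal

theorem config_pending_univ : config s g buf (pending s g Finset.univ) = s := by
  ext i
  by_cases h : s i = g i <;> simp [config, pending, Loc.point, h]

theorem config_pending_empty : config s g buf (pending s g ∅) = g := by
  ext i
  simp [config, pending, Loc.point]

theorem admissible_of_buffer {W : Finset (Fin n)} {slot : Fin n → ℕ} {K : ℕ}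
    (hslot : Set.InjOn slot W) (hK : ∀ i ∈ W, slot i < K) {ρ : Fin n → Loc}
    (hρ : ∀ i k, ρ i = .buffer k → i ∈ W ∧ slot i = k)
    (harc : ∀ i j, ρ i = .goal → ρ j = .start → ¬DepArc s g i j) : Admissible s g K ρ where
  not_depArc := harc
  buffer_inj i j k hi hj := by
    obtain ⟨hiW, rfl⟩ := hρ i k hi
    obtain ⟨hjW, hij⟩ := hρ j _ hj
    exact hslot hiW hjW hij.symm
  buffer_lt i k hi := by
    obtain ⟨hiW, rfl⟩ := hρ i k hi
    exact hK i hiW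

theorem ncard_diff_range_le {K : ℕ} {plan : List (Fin n → ℂ)}
    (h : ∀ d ∈ plan, ∀ i, d i ∈ points s g buf K) :
    ({x | ∃ d ∈ plan, ∃ i, d i = x} \ (Set.range s ∪ Set.range g)).ncard ≤ K := by
  refine (Set.ncard_le_ncard ?_ ((Set.finite_Iio K).image buf)).trans
    ((Set.ncard_image_le (Set.finite_Iio K)).trans ?_)
  · rintro x ⟨⟨d, hd, i, rfl⟩, hx⟩
    exact (h d hd i).resolve_left hx
  · rw [← Finset.coe_Iio, Set.ncard_coe_finset, Nat.card_Iio]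

section Moves

variable {K : ℕ} (hs : FeasibleConfig s) (hg : FeasibleConfig g)
  (hbuf : IsBufferFamily s g buf)
include hs hg hbuf

theorem hasPlan_update {σ : Fin n → Loc} {c : Fin n → ℂ} {k : ℕ} {i : Fin n} {l : Loc}
    (hl : l.point s g buf i ≠ (σ i).point s g buf i)
    (hadm : Admissible s g K (Function.update σ i l))
    (h : HasPlan (points s g buf K) (config s g buf (Function.update σ i l)) c k) :
    HasPlan (points s g buf K) (config s g buf σ) c (k + 1) := by
  refine .cons ?_ (hadm.feasibleConfig hs hg hbuf) hadm.config_mem h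
  rw [config_update]
  exact pickPlace_update hl

theorem hasPlan_piecewise {σ τ : Fin n → Loc} {F : Finset (Fin n)}
    (good : Finset (Fin n) → Prop)
    (hmove : ∀ i ∈ F, (τ i).point s g buf i ≠ (σ i).point s g buf i)
    (hstep : ∀ U ⊂ F, good U → ∃ i ∈ F \ U, good (insert i U))
    (hadm : ∀ U ⊆ F, good U → Admissible s g K (U.piecewise τ σ)) (h0 : good ∅) :
    HasPlan (points s g buf K) (config s g buf σ) (config s g buf (F.piecewise τ σ)) F.card := by
  suffices ∀ m, ∀ U ⊆ F, good U → (F \ U).card = m → HasPlan (points s g buf K)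
      (config s g buf (U.piecewise τ σ)) (config s g buf (F.piecewise τ σ)) m by
    simpa using this _ ∅ (Finset.empty_subset F) h0 (by simp)
  intro m
  induction m with
  | zero =>
    intro U hUF _ hm
    rw [hUF.antisymm (Finset.sdiff_eq_empty_iff_subset.1 (Finset.card_eq_zero.1 hm))]
    exact .refl _ _
  | succ m ih =>
    intro U hUF hU hm
    have hUF' : U ⊂ F := Finset.ssubset_iff_subset_ne.2
      ⟨hUF, by rintro rfl; simp at hm⟩
    obtain ⟨i, hi, hgood⟩ := hstep U hUF' hU
    obtain ⟨hiF, hiU⟩ := Finset.mem_sdiff.1 hi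
    have hrest := ih (insert i U) (Finset.insert_subset hiF hUF) hgood
      (by rw [Finset.sdiff_insert, Finset.card_erase_of_mem hi, hm, Nat.add_sub_cancel])
    have hadm' := hadm _ (Finset.insert_subset hiF hUF) hgood
    rw [Finset.piecewise_insert] at hrest hadm'
    refine hasPlan_update hs hg hbuf ?_ hadm' hrest
    rw [Finset.piecewise_eq_of_notMem _ _ _ hiU]
    exact hmove i hiF

theorem hasPlan_toBuffers {T W : Finset (Fin n)} {slot : Fin n → ℕ}
    (hT : ∀ i j, DepArc s g i j → j ∈ T → i ∈ T) (hslot : Set.InjOn slot W)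
    (hK : ∀ i ∈ W, slot i < K) :
    HasPlan (points s g buf K) (config s g buf (pending s g T))
      (config s g buf (W.piecewise (fun i => .buffer (slot i)) (pending s g T))) W.card := by
  refine hasPlan_piecewise hs hg hbuf (fun _ => True) (fun i _ => ?_)
    (fun U hU _ => ?_) (fun U hUW _ => admissible_of_buffer hslot hK ?_ ?_) trivial
  · unfold pending
    split_ifs <;> simp [Loc.point, hbuf.buffer_ne]
  · obtain ⟨x, hxW, hxU⟩ := Finset.exists_of_ssubset hU
    exact ⟨x, Finset.mem_sdiff.2 ⟨hxW, hxU⟩, trivial⟩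
  · intro i k hi
    simp only [Finset.piecewise, pending] at hi
    split_ifs at hi with h
    · exact ⟨hUW h, Loc.buffer.inj hi⟩
  · intro i j hi hj harc
    simp only [Finset.piecewise, pending] at hi hj
    grind [hT i j harc, harc.start_ne_goal hs]

theorem hasPlan_startsToGoals {T C S W R : Finset (Fin n)} {slot : Fin n → ℕ}
    (hT : ∀ i j, DepArc s g i j → j ∈ T → i ∈ T)
    (hC : ∀ i j, DepArc s g i j → i ∈ C → j ∈ T → j ∈ C) (hCT : C ⊆ T)
    (hS : IsFVS (DepArc s g) S) (hslot : Set.InjOn slot W) (hK : ∀ i ∈ W, slot i < K)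
    (hW : ∀ i, i ∈ W ↔ i ∈ C ∧ i ∈ S) (hR : ∀ i, i ∈ R ↔ i ∈ C ∧ i ∉ S ∧ s i ≠ g i) :
    HasPlan (points s g buf K)
      (config s g buf (W.piecewise (fun i => .buffer (slot i)) (pending s g T)))
      (config s g buf (R.piecewise (fun _ => .goal)
        (W.piecewise (fun i => .buffer (slot i)) (pending s g T)))) R.card := by
  refine hasPlan_piecewise hs hg hbuf (fun U => ∀ i ∈ U, ∀ j ∈ R \ U, ¬DepArc s g i j)
    (fun i hi => ?_) (fun U hU hgood => ?_)
    (fun U hUR hgood => admissible_of_buffer hslot hK ?_ ?_) (by simp)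
  · simp only [Finset.piecewise, pending, Loc.point]
    grind [hR i, hW i, hCT ((hR i).1 hi).1]
  · obtain ⟨x, hx, hxmin⟩ := hS.exists_forall_not_arc (U := ↑(R \ U))
      (Finset.coe_nonempty.2 (Finset.sdiff_nonempty.2 hU.not_subset))
      (Set.disjoint_left.2 fun x hx hxS => ((hR x).1 (Finset.mem_sdiff.1 hx).1).2.1 hxS)
    refine ⟨x, hx, fun i hi j hj => ?_⟩
    rw [Finset.sdiff_insert] at hj
    rcases Finset.mem_insert.1 hi with rfl | hi
    exacts [hxmin j (Finset.mem_of_mem_erase hj), hgood i hi j (Finset.mem_of_mem_erase hj)]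
  · intro i k hi
    simp only [Finset.piecewise, pending] at hi
    grind
  · intro i j hi hj harc
    simp only [Finset.piecewise, pending] at hi hj
    grind [hT i j harc, harc.start_ne_goal hs, hC i j harc, hR i, hR j, hW j, hgood i]

theorem hasPlan_buffersToGoals {T C S W R : Finset (Fin n)} {slot : Fin n → ℕ}
    (hT : ∀ i j, DepArc s g i j → j ∈ T → i ∈ T)
    (hC : ∀ i j, DepArc s g i j → i ∈ C → j ∈ T → j ∈ C)
    (hslot : Set.InjOn slot W) (hK : ∀ i ∈ W, slot i < K)
    (hW : ∀ i, i ∈ W ↔ i ∈ C ∧ i ∈ S) (hR : ∀ i, i ∈ R ↔ i ∈ C ∧ i ∉ S ∧ s i ≠ g i) :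
    HasPlan (points s g buf K)
      (config s g buf (R.piecewise (fun _ => .goal)
        (W.piecewise (fun i => .buffer (slot i)) (pending s g T))))
      (config s g buf (W.piecewise (fun _ => .goal) (R.piecewise (fun _ => .goal)
        (W.piecewise (fun i => .buffer (slot i)) (pending s g T))))) W.card := by
  refine hasPlan_piecewise hs hg hbuf (fun _ => True) (fun i hi => ?_)
    (fun U hU _ => ?_) (fun U hUW _ => admissible_of_buffer hslot hK ?_ ?_) trivial
  · simp only [Finset.piecewise, Loc.point]
    grind [hR i, hW i, hbuf.buffer_ne (slot i) i]
  · obtain ⟨x, hxW, hxU⟩ := Finset.exists_of_ssubset hU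
    exact ⟨x, Finset.mem_sdiff.2 ⟨hxW, hxU⟩, trivial⟩
  · intro i k hi
    simp only [Finset.piecewise, pending] at hi
    grind
  · intro i j hi hj harc
    simp only [Finset.piecewise, pending] at hi hj
    grind [hT i j harc, harc.start_ne_goal hs, hC i j harc, hR i, hR j, hW i, hW j]

theorem hasPlan_component {T C S : Finset (Fin n)} {slot : Fin n → ℕ}
    (hT : ∀ i j, DepArc s g i j → j ∈ T → i ∈ T)
    (hC : ∀ i j, DepArc s g i j → i ∈ C → j ∈ T → j ∈ C) (hCT : C ⊆ T)
    (hS : IsFVS (DepArc s g) S) (hSM : ∀ i ∈ S, s i ≠ g i)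
    (hslot : Set.InjOn slot (C.filter (· ∈ S))) (hK : ∀ i ∈ C.filter (· ∈ S), slot i < K) :
    HasPlan (points s g buf K) (config s g buf (pending s g T))
      (config s g buf (pending s g (T \ C)))
      ((C.filter fun i => s i ≠ g i).card + (C.filter (· ∈ S)).card) := by
  set W := C.filter (· ∈ S)
  set R := C.filter fun i => i ∉ S ∧ s i ≠ g i
  have hW : ∀ i, i ∈ W ↔ i ∈ C ∧ i ∈ S := fun i => Finset.mem_filter
  have hR : ∀ i, i ∈ R ↔ i ∈ C ∧ i ∉ S ∧ s i ≠ g i := fun i => Finset.mem_filter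
  have hcount : R.card + W.card = (C.filter fun i => s i ≠ g i).card := by
    have hsplit : (C.filter fun i => s i ≠ g i) = R ∪ W := by
      ext i
      simp only [Finset.mem_union, Finset.mem_filter, hR, hW]
      grind [hSM i]
    rw [hsplit, Finset.card_union_of_disjoint
      (Finset.disjoint_left.2 fun i hiR hiW => ((hR i).1 hiR).2.1 ((hW i).1 hiW).2)]
  have hend : W.piecewise (fun _ => .goal) (R.piecewise (fun _ => .goal)
      (W.piecewise (fun i => .buffer (slot i)) (pending s g T))) = pending s g (T \ C) := by
    ext i
    simp only [Finset.piecewise, pending, Finset.mem_sdiff]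
    grind [hR i, hW i]
  have := ((hasPlan_toBuffers hs hg hbuf hT hslot hK).trans
    (hasPlan_startsToGoals hs hg hbuf hT hC hCT hS hslot hK hW hR)).trans
    (hasPlan_buffersToGoals hs hg hbuf hT hC hslot hK hW hR)
  rw [hend] at this
  convert this using 1
  omega

theorem hasPlan_pending {S : Finset (Fin n)} (hS : IsFVS (DepArc s g) S)
    (hSM : ∀ i ∈ S, s i ≠ g i)
    (hK : ∀ m, (↑S ∩ {x | Quotient.mk (sccSetoid (DepArc s g)) x = Quotient.mk _ m}).ncard ≤ K)
    (T : Finset (Fin n)) (hT : ∀ i j, DepArc s g i j → j ∈ T → i ∈ T) :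
    HasPlan (points s g buf K) (config s g buf (pending s g T)) (config s g buf (pending s g ∅))
      ((T.filter fun i => s i ≠ g i).card + (T.filter (· ∈ S)).card) := by
  classical
  induction T using Finset.strongInduction with
  | H T ih =>
    rcases T.eq_empty_or_nonempty with rfl | hTne
    · simpa using HasPlan.refl _ _
    obtain ⟨m, hmT, hm⟩ := exists_sink_scc (DepArc s g) (Finset.coe_nonempty.2 hTne)
    set C := Finset.univ.filter fun y => Quotient.mk (sccSetoid (DepArc s g)) y = Quotient.mk _ m
    have hmemC : ∀ y, y ∈ C ↔ ReflTransGen (DepArc s g) y m ∧ ReflTransGen (DepArc s g) m y :=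
      fun y => by
        simp only [C, Finset.mem_filter, Finset.mem_univ, true_and]
        exact Quotient.eq
    have hmC : m ∈ C := (hmemC m).2 ⟨.refl, .refl⟩
    have hCT : C ⊆ T := fun y hy => mem_of_reflTransGen hT ((hmemC y).1 hy).1 hmT
    have hC : ∀ i j, DepArc s g i j → i ∈ C → j ∈ T → j ∈ C := fun i j hij hi hj =>
      have hmj := ((hmemC i).1 hi).2.tail hij
      (hmemC j).2 ⟨hm j hj hmj, hmj⟩
    have hTC : ∀ i j, DepArc s g i j → j ∈ T \ C → i ∈ T \ C := by
      intro i j hij hj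
      obtain ⟨hjT, hjC⟩ := Finset.mem_sdiff.1 hj
      exact Finset.mem_sdiff.2 ⟨hT i j hij hjT, fun hiC => hjC (hC i j hij hiC hjT)⟩
    obtain ⟨slot, hslot, hslotlt⟩ := (C.filter (· ∈ S)).exists_injOn_lt_card
    have hWK : (C.filter (· ∈ S)).card ≤ K := by
      rw [← Set.ncard_coe_finset]
      convert hK m using 2
      ext
      simp [C, and_comm]
    have := (hasPlan_component hs hg hbuf hT hC hCT hS hSM hslot
      fun i hi => (hslotlt i hi).trans_le hWK).trans
      (ih (T \ C) (Finset.sdiff_ssubset hCT ⟨m, hmC⟩) hTC)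
    rw [Finset.card_filter_eq_add_card_filter_sdiff hCT,
      Finset.card_filter_eq_add_card_filter_sdiff hCT]
    convert this using 1
    omega

end Moves

end Rearrangement

open Metric in
/-- Every tabletop rearrangement instance admits a plan with exactly
`|{i : sᵢ ≠ gᵢ}| + ν(D)` pick-and-place actions in which the set of positions used that
are not among the start or goal positions has cardinality at most the maximum of
`ν(D[C])` over all strongly connected components `C` of the dependency digraph `D`. -/
theorem stmt_17 {n : ℕ} (s g : Fin n → ℂ)
    (hs : ∀ i j : Fin n, i ≠ j → Disjoint (closedBall (s i) 1) (closedBall (s j) 1))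
    (hg : ∀ i j : Fin n, i ≠ j → Disjoint (closedBall (g i) 1) (closedBall (g j) 1)) :
    ∃ plan : List (Fin n → ℂ), IsPlan s g plan ∧
      plan.length = {i : Fin n | s i ≠ g i}.ncard + nuFVS (DepArc s g) ∧
      ({x : ℂ | ∃ c ∈ plan, ∃ i : Fin n, c i = x} \ (Set.range s ∪ Set.range g)).ncard ≤
        ⨆ c : Quotient (sccSetoid (DepArc s g)),
          nuFVS (fun u v : {x : Fin n // Quotient.mk (sccSetoid (DepArc s g)) x = c} =>
            DepArc s g u.1 v.1) := by
  classical
  obtain ⟨buf, hbuf⟩ := Rearrangement.exists_isBufferFamily s g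
  obtain ⟨S, hS, hScard⟩ := exists_isFVS_ncard_eq_nuFVS (DepArc s g)
  have hSM : ∀ i ∈ S, s i ≠ g i := fun i hi =>
    have ⟨_, hij⟩ := hS.exists_arc_of_ncard_eq hScard hi
    hij.start_ne_goal hs
  set K := ⨆ c : Quotient (sccSetoid (DepArc s g)),
    nuFVS fun u v : {x // Quotient.mk (sccSetoid (DepArc s g)) x = c} => DepArc s g u.1 v.1
  have hK : ∀ m, (S ∩ {x | Quotient.mk _ x = Quotient.mk _ m}).ncard ≤ K := fun m =>
    ncard_inter_le_iSup_nuFVS_scc hS hScard _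
  obtain ⟨plan, hplan, hlen, hpts⟩ := Rearrangement.hasPlan_pending hs hg hbuf (K := K)
    (S := S.toFinset) (by simpa) (by simpa) (fun m => by rw [Set.coe_toFinset]; exact hK m)
    Finset.univ fun _ _ _ _ => Finset.mem_univ _
  rw [Rearrangement.config_pending_univ, Rearrangement.config_pending_empty] at hplan
  refine ⟨plan, hplan, ?_, Rearrangement.ncard_diff_range_le hpts⟩
  simp [hlen, ← hScard, Set.ncard_eq_toFinset_card']
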